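/- arXiv:1207.5527 — 5 statements merged into one kernel-verified Lean document; each statement's English description precedes it below -/
import Mathlib

section
/- Let R be a (possibly non-unital) ring, let e ∈ R be an idempotent with ReR = R, and let I be a two-sided ideal of R that has a countable approximate unit consisting of idempotents. Then the two-sided ideal of R generated by eIe equals I. -/
/-!
Let `J` be the ideal generated by `eIe`. For fixed `a`, `b`, the sets `{s | a * I * s ⊆ J}` and
`{t | t * I * b ⊆ J}` are two-sided ideals, so each of them is all of `R` as soon as it contains
`e`, because `ReR = R`. Applying this first with `a = e` and then with arbitrary `b` gives
`R * I * R ⊆ J`. Finally every `x ∈ I` lies in `R * I * R`, since `x = uₙ * x * uₙ` for a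
member `uₙ` of the approximate unit.
-/

namespace TwoSidedIdeal

variable {R : Type*} [NonUnitalRing R]

def rightSandwich (I J : TwoSidedIdeal R) (a : R) : TwoSidedIdeal R :=
  mk' {s | ∀ y ∈ I, a * y * s ∈ J}
    (fun _ _ => by simpa only [mul_zero] using J.zero_mem)
    (fun hs ht y hy => by simpa only [mul_add] using J.add_mem (hs y hy) (ht y hy))
    (fun hs y hy => by simpa only [mul_neg] using J.neg_mem (hs y hy))
    (fun {r _} hs y hy => by simpa only [mul_assoc] using hs (y * r) (I.mul_mem_right _ _ hy))
    (fun {_ r} hs y hy => by simpa only [mul_assoc] using J.mul_mem_right _ r (hs y hy))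

def leftSandwich (I J : TwoSidedIdeal R) (b : R) : TwoSidedIdeal R :=
  mk' {t | ∀ y ∈ I, t * y * b ∈ J}
    (fun _ _ => by simpa only [zero_mul] using J.zero_mem)
    (fun hs ht y hy => by simpa only [add_mul] using J.add_mem (hs y hy) (ht y hy))
    (fun hs y hy => by simpa only [neg_mul] using J.neg_mem (hs y hy))
    (fun {r _} hs y hy => by simpa only [mul_assoc] using J.mul_mem_left r _ (hs y hy))
    (fun {_ r} hs y hy => by simpa only [mul_assoc] using hs (r * y) (I.mul_mem_left _ _ hy))

@[simp]
lemma mem_rightSandwich {I J : TwoSidedIdeal R} {a s : R} :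
    s ∈ rightSandwich I J a ↔ ∀ y ∈ I, a * y * s ∈ J :=
  mem_mk' ..

@[simp]
lemma mem_leftSandwich {I J : TwoSidedIdeal R} {b t : R} :
    t ∈ leftSandwich I J b ↔ ∀ y ∈ I, t * y * b ∈ J :=
  mem_mk' ..

lemma mem_of_mem_closure_sandwiches {K : TwoSidedIdeal R} {e : R} (he : e ∈ K) {x : R}
    (hx : x ∈ AddSubgroup.closure
      {y : R | (∃ r, y = e * r) ∨ (∃ r, y = r * e) ∨ (∃ r₁ r₂, y = r₁ * e * r₂)}) :
    x ∈ K := by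
  induction hx using AddSubgroup.closure_induction with
  | mem y hy =>
    rcases hy with ⟨r, rfl⟩ | ⟨r, rfl⟩ | ⟨r₁, r₂, rfl⟩
    · exact K.mul_mem_right _ _ he
    · exact K.mul_mem_left _ _ he
    · exact K.mul_mem_right _ _ (K.mul_mem_left _ _ he)
  | zero => exact K.zero_mem
  | add _ _ _ _ ha hb => exact K.add_mem ha hb
  | neg _ _ ha => exact K.neg_mem ha

lemma mul_mul_mem_span_corner {e : R}
    (hfull : ∀ x : R, x ∈ AddSubgroup.closure
      {y : R | (∃ r, y = e * r) ∨ (∃ r, y = r * e) ∨ (∃ r₁ r₂, y = r₁ * e * r₂)})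
    {I : TwoSidedIdeal R} {y : R} (hy : y ∈ I) (t s : R) :
    t * y * s ∈ span {x : R | ∃ a ∈ I, x = e * a * e} := by
  set J := span {x : R | ∃ a ∈ I, x = e * a * e}
  have he : e ∈ rightSandwich I J e :=
    mem_rightSandwich.2 fun a ha ↦ subset_span ⟨a, ha, rfl⟩
  have hs : e ∈ leftSandwich I J s :=
    mem_leftSandwich.2 (mem_rightSandwich.1 (mem_of_mem_closure_sandwiches he (hfull s)))
  exact mem_leftSandwich.1 (mem_of_mem_closure_sandwiches hs (hfull t)) y hy

end TwoSidedIdeal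

theorem stmt5_general {R : Type*} [NonUnitalRing R] (e : R)
    (hfull : ∀ x : R, x ∈ AddSubgroup.closure
      {y : R | (∃ r, y = e * r) ∨ (∃ r, y = r * e) ∨ (∃ r₁ r₂, y = r₁ * e * r₂)})
    (I : TwoSidedIdeal R)
    (u : ℕ → R)
    (huabs : ∀ x ∈ I, ∃ n, u n * x = x ∧ x * u n = x) :
    TwoSidedIdeal.span {x : R | ∃ a ∈ I, x = e * a * e} = I := by
  apply le_antisymm
  · rw [TwoSidedIdeal.span_le]
    rintro - ⟨a, ha, rfl⟩
    exact I.mul_mem_right _ _ (I.mul_mem_left _ _ ha)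
  · intro x hx
    obtain ⟨n, hleft, hright⟩ := huabs x hx
    have hx_eq : u n * x * u n = x := by rw [hleft, hright]
    exact hx_eq ▸ TwoSidedIdeal.mul_mul_mem_span_corner hfull hx (u n) (u n)

/-- If `e` is an idempotent in `R` with `ReR = R` and `I` is a two-sided ideal of `R` having a
countable approximate unit of idempotents, then the two-sided ideal generated by `eIe` is `I`. -/
theorem stmt5 {R : Type*} [NonUnitalRing R] (e : R) (he : e * e = e)
    (hfull : ∀ x : R, x ∈ AddSubgroup.closure
      {y : R | (∃ r, y = e * r) ∨ (∃ r, y = r * e) ∨ (∃ r₁ r₂, y = r₁ * e * r₂)})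
    (I : TwoSidedIdeal R)
    (u : ℕ → R) (humem : ∀ n, u n ∈ I) (huid : ∀ n, u n * u n = u n)
    (huchain : ∀ n, u (n + 1) * u n = u n ∧ u n * u (n + 1) = u n)
    (huabs : ∀ x ∈ I, ∃ n, u n * x = x ∧ x * u n = x) :
    TwoSidedIdeal.span {x : R | ∃ a ∈ I, x = e * a * e} = I :=
  stmt5_general e hfull I u huabs
end

section
/- Let R be a ring and e ∈ R an idempotent with ReR = R. Suppose every two-sided ideal of R has a countable approximate unit consisting of idempotents. Then the map I ↦ eIe is a lattice isomorphism from the lattice of two-sided ideals of R onto the lattice of two-sided ideals of the corner ring eRe, with inverse sending an ideal J of eRe to the two-sided ideal of R generated by J. -/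
/-!
Under the inclusion `ι : eRe → R` the two maps are `I ↦ ι⁻¹ I = eIe` and `J ↦ ⟨J⟩`.
If `z ∈ ⟨J⟩` then `e r₁ z r₂ e ∈ J` for all `r₁ r₂`, because these `z` form an ideal of `R`
containing `J`; for `z ∈ eRe` and `r₁ = r₂ = e` this gives `⟨J⟩ ∩ eRe = J`. Conversely, if
`eIe ⊆ K` then `(ReR) I (ReR) ⊆ K`; as `ReR = R` and every `x ∈ I` equals `u x u` for a member
`u` of the approximate unit, `I ⊆ ⟨eIe⟩`.
-/

/-- The corner `eRe` of a ring `R` by an idempotent `e`, realized as the non-unital subring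
of elements `x` with `e*x*e = x`. -/
def corner {R : Type*} [NonUnitalRing R] (e : R) (he : e * e = e) : NonUnitalSubring R where
  carrier := {x : R | e * x * e = x}
  zero_mem' := by simp
  add_mem' := by
    intro a b ha hb
    simp only [Set.mem_setOf_eq] at *
    rw [mul_add, add_mul, ha, hb]
  neg_mem' := by
    intro a ha
    simp only [Set.mem_setOf_eq] at *
    rw [mul_neg, neg_mul, ha]
  mul_mem' := by
    intro a b ha hb
    simp only [Set.mem_setOf_eq] at *
    have ha' : e * a = a := by
      conv_lhs => rw [← ha]
      rw [← mul_assoc, ← mul_assoc, he, ha]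
    have hb' : b * e = b := by
      conv_lhs => rw [← hb]
      rw [mul_assoc, mul_assoc, he, ← mul_assoc, hb]
    rw [← mul_assoc, ha', mul_assoc, hb']

namespace TwoSidedIdeal

lemma map_comap_le {R S F : Type*} [NonUnitalRing R] [NonUnitalRing S] [FunLike F R S]
    [NonUnitalRingHomClass F R S] (f : F) (I : TwoSidedIdeal S) : map f (comap f I) ≤ I :=
  span_le.mpr <| by rintro - ⟨x, hx, rfl⟩; exact (mem_comap f).mp hx

variable {R : Type*} [NonUnitalRing R]

lemma mem_span_singleton_of_mem_closure {e x : R}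
    (hx : x ∈ AddSubgroup.closure
      {y : R | (∃ r, y = e * r) ∨ (∃ r, y = r * e) ∨ (∃ r₁ r₂, y = r₁ * e * r₂)}) :
    x ∈ span {e} := by
  have he : e ∈ span {e} := subset_span rfl
  induction hx using AddSubgroup.closure_induction with
  | mem y hy =>
    obtain ⟨r, rfl⟩ | ⟨r, rfl⟩ | ⟨r₁, r₂, rfl⟩ := hy
    · exact mul_mem_right _ _ _ he
    · exact mul_mem_left _ _ _ he
    · exact mul_mem_right _ _ _ (mul_mem_left _ _ _ he)
  | zero => exact zero_mem _
  | add _ _ _ _ ha hb => exact add_mem _ ha hb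
  | neg _ _ ha => exact neg_mem _ ha

lemma mul_mul_mem_of_mem_span_singleton_right {I K : TwoSidedIdeal R} {e : R}
    (h : ∀ x ∈ I, e * x * e ∈ K) {w : R} (hw : w ∈ span {e}) {x : R} (hx : x ∈ I) :
    e * x * w ∈ K := by
  induction hw using span_induction generalizing x with
  | mem w hw => rw [Set.mem_singleton_iff.mp hw]; exact h x hx
  | zero => simp
  | add w w' _ _ ih ih' => rw [mul_add]; exact K.add_mem (ih hx) (ih' hx)
  | neg w _ ih => rw [mul_neg]; exact K.neg_mem (ih hx)
  | left_absorb a w _ ih => rw [← mul_assoc, mul_assoc e]; exact ih (I.mul_mem_right _ _ hx)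
  | right_absorb b w _ ih => rw [← mul_assoc]; exact K.mul_mem_right _ _ (ih hx)

lemma mul_mul_mem_of_mem_span_singleton {I K : TwoSidedIdeal R} {e : R}
    (h : ∀ x ∈ I, e * x * e ∈ K) {v w : R} (hv : v ∈ span {e}) (hw : w ∈ span {e})
    {x : R} (hx : x ∈ I) : v * x * w ∈ K := by
  induction hv using span_induction generalizing x with
  | mem v hv =>
    rw [Set.mem_singleton_iff.mp hv]; exact mul_mul_mem_of_mem_span_singleton_right h hw hx
  | zero => simp
  | add v v' _ _ ih ih' => rw [add_mul, add_mul]; exact K.add_mem (ih hx) (ih' hx)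
  | neg v _ ih => rw [neg_mul, neg_mul]; exact K.neg_mem (ih hx)
  | left_absorb a v _ ih => rw [mul_assoc a, mul_assoc a]; exact K.mul_mem_left _ _ (ih hx)
  | right_absorb b v _ ih => rw [mul_assoc v b x]; exact ih (I.mul_mem_left _ _ hx)

end TwoSidedIdeal

open TwoSidedIdeal

section Corner

variable {R : Type*} [NonUnitalRing R] {e : R} (he : e * e = e)

local notation "ι" => NonUnitalSubringClass.subtype (corner e he)

lemma mul_mul_mem_corner (r : R) : e * r * e ∈ corner e he := by
  change e * (e * r * e) * e = e * r * e
  rw [← mul_assoc, ← mul_assoc, he, mul_assoc, he]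

def cornerProj : R →+ corner e he where
  toFun r := ⟨e * r * e, mul_mul_mem_corner he r⟩
  map_zero' := by ext; simp
  map_add' r s := by ext; simp [mul_add, add_mul]

lemma cornerProj_mul_mul (r₁ r₂ : R) (x : corner e he) :
    cornerProj he (r₁ * x * r₂) = cornerProj he r₁ * x * cornerProj he r₂ := by
  ext
  change e * (r₁ * x * r₂) * e = e * r₁ * e * x * (e * r₂ * e)
  conv_lhs => rw [← (x.2 : e * (x : R) * e = x)]
  simp only [mul_assoc]

lemma cornerProj_mul_mul_mem {J : TwoSidedIdeal (corner e he)} {z : R}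
    (hz : z ∈ map ι J) (r₁ r₂ : R) : cornerProj he (r₁ * z * r₂) ∈ J := by
  induction hz using span_induction generalizing r₁ r₂ with
  | mem _ hz =>
    obtain ⟨x, hx, rfl⟩ := hz
    rw [NonUnitalSubringClass.coe_subtype, cornerProj_mul_mul]
    exact J.mul_mem_right _ _ (J.mul_mem_left _ _ hx)
  | zero => simp
  | add z z' _ _ ih ih' => rw [mul_add, add_mul, map_add]; exact J.add_mem (ih r₁ r₂) (ih' r₁ r₂)
  | neg z _ ih => rw [mul_neg, neg_mul, map_neg]; exact J.neg_mem (ih r₁ r₂)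
  | left_absorb a z _ ih => rw [← mul_assoc r₁]; exact ih _ _
  | right_absorb b z _ ih => rw [← mul_assoc r₁, mul_assoc _ b]; exact ih _ _

lemma comap_map_corner (J : TwoSidedIdeal (corner e he)) : comap ι (map ι J) = J := by
  refine le_antisymm (fun x hx => ?_) (fun x hx => (mem_comap _).mpr (subset_span ⟨x, hx, rfl⟩))
  have hxe : e * (x : R) * e = x := x.2
  convert cornerProj_mul_mul_mem he ((mem_comap _).mp hx) e e
  ext
  change (x : R) = e * (e * x * e) * e
  rw [hxe, hxe]

lemma le_map_comap_corner (hfull : ∀ u : R, u ∈ span {e}) {I : TwoSidedIdeal R}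
    (hunit : ∀ x ∈ I, ∃ u, u * x = x ∧ x * u = x) :
    I ≤ map ι (comap ι I) := by
  intro x hx
  obtain ⟨u, hux, hxu⟩ := hunit x hx
  have hcorner : ∀ y ∈ I, e * y * e ∈ map ι (comap ι I) :=
    fun y hy => subset_span ⟨⟨e * y * e, mul_mul_mem_corner he y⟩,
      (mem_comap _).mpr (I.mul_mem_right _ _ (I.mul_mem_left _ _ hy)), rfl⟩
  have hx' : u * x * u = x := by rw [hux, hxu]
  rw [← hx']
  exact mul_mul_mem_of_mem_span_singleton hcorner (hfull u) (hfull u) hx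

def cornerOrderIso (hfull : ∀ u : R, u ∈ span {e})
    (hunit : ∀ I : TwoSidedIdeal R, ∀ x ∈ I, ∃ u, u * x = x ∧ x * u = x) :
    TwoSidedIdeal R ≃o TwoSidedIdeal (corner e he) :=
  Equiv.toOrderIso
    { toFun := comap ι
      invFun := map ι
      left_inv := fun I =>
        le_antisymm (map_comap_le _ I) (le_map_comap_corner he hfull (hunit I))
      right_inv := comap_map_corner he }
    (comap _).monotone (fun _ _ => map_mono _)

end Corner

/-- If `e` is an idempotent with `ReR = R` and every two-sided ideal of `R` has a countable
approximate unit of idempotents, then `I ↦ eIe` is a lattice isomorphism from the ideal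
lattice of `R` onto the ideal lattice of the corner `eRe`, with inverse sending an ideal of
`eRe` to the two-sided ideal of `R` it generates. -/
theorem stmt6 {R : Type*} [NonUnitalRing R] (e : R) (he : e * e = e)
    (hfull : ∀ x : R, x ∈ AddSubgroup.closure
      {y : R | (∃ r, y = e * r) ∨ (∃ r, y = r * e) ∨ (∃ r₁ r₂, y = r₁ * e * r₂)})
    (hau : ∀ I : TwoSidedIdeal R, ∃ u : ℕ → R,
      (∀ n, u n ∈ I) ∧ (∀ n, u n * u n = u n) ∧
      (∀ n, u (n + 1) * u n = u n ∧ u n * u (n + 1) = u n) ∧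
      (∀ x ∈ I, ∃ n, u n * x = x ∧ x * u n = x)) :
    ∃ β : TwoSidedIdeal R ≃o TwoSidedIdeal (corner e he),
      (∀ (I : TwoSidedIdeal R) (x : corner e he), x ∈ β I ↔ (x : R) ∈ I) ∧
      (∀ J : TwoSidedIdeal (corner e he),
        β.symm J = TwoSidedIdeal.span (Subtype.val '' (J : Set (corner e he)))) := by
  have hunit : ∀ I : TwoSidedIdeal R, ∀ x ∈ I, ∃ u, u * x = x ∧ x * u = x := by
    intro I x hx
    obtain ⟨u, -, -, -, hu⟩ := hau I
    obtain ⟨n, hn⟩ := hu x hx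
    exact ⟨u n, hn⟩
  exact ⟨cornerOrderIso he (fun u => mem_span_singleton_of_mem_closure (hfull u)) hunit,
    fun _ _ => mem_comap _, fun _ => rfl⟩
end

section
/- Let R be a ring and e ∈ R an idempotent with ReR = R, and suppose I is a two-sided ideal of R with a countable approximate unit of idempotents. Then for every x ∈ I, x lies in the set IeI of finite sums of elements of the forms ea, be, and a·e·b with a, b ∈ I; in particular IeI = I. -/
/-!
Write `x ∈ I` as `x = u x u` with `u` a member of the approximate unit. Since `ReR = R`,
`x` is a sum of terms `e r`, `r e`, `r₁ e r₂`, and conjugating each by `u` gives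
`u e (r u)`, `(u r) e u`, `(u r₁) e (r₂ u)`, all of the form `a e b` with `a, b ∈ I`.
-/

section

variable {R : Type*} [NonUnitalRing R]

/-- `AddSubgroup.closure (sandwichSet S e)` is the paper's `SeS`. -/
def sandwichSet (S : Set R) (e : R) : Set R :=
  {y | (∃ a ∈ S, y = e * a) ∨ (∃ b ∈ S, y = b * e) ∨ (∃ a ∈ S, ∃ b ∈ S, y = a * e * b)}

namespace TwoSidedIdeal

variable (I : TwoSidedIdeal R) (e : R)

theorem mul_mul_mem_sandwichSet {a b y : R} (ha : a ∈ I) (hb : b ∈ I)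
    (hy : y ∈ sandwichSet Set.univ e) : a * y * b ∈ sandwichSet I e := by
  refine Or.inr (Or.inr ?_)
  rcases hy with ⟨r, -, rfl⟩ | ⟨r, -, rfl⟩ | ⟨r₁, -, r₂, -, rfl⟩
  · exact ⟨a, ha, r * b, I.mul_mem_left _ _ hb, by noncomm_ring⟩
  · exact ⟨a * r, I.mul_mem_right _ _ ha, b, hb, by noncomm_ring⟩
  · exact ⟨a * r₁, I.mul_mem_right _ _ ha, r₂ * b, I.mul_mem_left _ _ hb, by noncomm_ring⟩

theorem mul_mul_mem_closure_sandwichSet {a b y : R} (ha : a ∈ I) (hb : b ∈ I)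
    (hy : y ∈ AddSubgroup.closure (sandwichSet Set.univ e)) :
    a * y * b ∈ AddSubgroup.closure (sandwichSet I e) := by
  let f : R →+ R := (AddMonoidHom.mulRight b).comp (AddMonoidHom.mulLeft a)
  have hf : f y ∈ (AddSubgroup.closure (sandwichSet Set.univ e)).map f := ⟨y, hy, rfl⟩
  rw [AddMonoidHom.map_closure] at hf
  refine AddSubgroup.closure_mono ?_ hf
  rintro _ ⟨z, hz, rfl⟩
  exact I.mul_mul_mem_sandwichSet e ha hb hz

theorem closure_sandwichSet_le :
    AddSubgroup.closure (sandwichSet I e) ≤ AddSubgroup.ofClass I := by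
  rw [AddSubgroup.closure_le]
  rintro _ (⟨a, ha, rfl⟩ | ⟨b, hb, rfl⟩ | ⟨a, ha, b, hb, rfl⟩)
  · exact I.mul_mem_left _ _ ha
  · exact I.mul_mem_right _ _ hb
  · exact I.mul_mem_right _ _ (I.mul_mem_right _ _ ha)

end TwoSidedIdeal

end

theorem stmt7_general {R : Type*} [NonUnitalRing R] (e : R)
    (hfull : ∀ x : R, x ∈ AddSubgroup.closure
      {y : R | (∃ r, y = e * r) ∨ (∃ r, y = r * e) ∨ (∃ r₁ r₂, y = r₁ * e * r₂)})
    (I : TwoSidedIdeal R)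
    (u : ℕ → R) (humem : ∀ n, u n ∈ I)
    (huabs : ∀ x ∈ I, ∃ n, u n * x = x ∧ x * u n = x) :
    (∀ x ∈ I, x ∈ AddSubgroup.closure
      {y : R | (∃ a ∈ I, y = e * a) ∨ (∃ b ∈ I, y = b * e) ∨ (∃ a ∈ I, ∃ b ∈ I, y = a * e * b)}) ∧
    (AddSubgroup.closure
      {y : R | (∃ a ∈ I, y = e * a) ∨ (∃ b ∈ I, y = b * e) ∨ (∃ a ∈ I, ∃ b ∈ I, y = a * e * b)}
        : Set R) = (I : Set R) := by
  have hmem : ∀ x ∈ I, x ∈ AddSubgroup.closure (sandwichSet I e) := by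
    intro x hx
    obtain ⟨n, hleft, hright⟩ := huabs x hx
    have hx_full : x ∈ AddSubgroup.closure (sandwichSet Set.univ e) := by
      simpa [sandwichSet] using hfull x
    simpa only [hleft, hright] using
      I.mul_mul_mem_closure_sandwichSet e (humem n) (humem n) hx_full
  exact ⟨hmem, subset_antisymm (I.closure_sandwichSet_le e) hmem⟩

/-- If `e` is an idempotent with `ReR = R` and `I` is a two-sided ideal with a countable
approximate unit of idempotents, then every `x ∈ I` is a finite sum of elements of the forms
`e*a`, `b*e`, `a*e*b` with `a, b ∈ I`; in particular `IeI = I`. -/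
theorem stmt7 {R : Type*} [NonUnitalRing R] (e : R) (he : e * e = e)
    (hfull : ∀ x : R, x ∈ AddSubgroup.closure
      {y : R | (∃ r, y = e * r) ∨ (∃ r, y = r * e) ∨ (∃ r₁ r₂, y = r₁ * e * r₂)})
    (I : TwoSidedIdeal R)
    (u : ℕ → R) (humem : ∀ n, u n ∈ I) (huid : ∀ n, u n * u n = u n)
    (huchain : ∀ n, u (n + 1) * u n = u n ∧ u n * u (n + 1) = u n)
    (huabs : ∀ x ∈ I, ∃ n, u n * x = x ∧ x * u n = x) :
    (∀ x ∈ I, x ∈ AddSubgroup.closure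
      {y : R | (∃ a ∈ I, y = e * a) ∨ (∃ b ∈ I, y = b * e) ∨ (∃ a ∈ I, ∃ b ∈ I, y = a * e * b)}) ∧
    (AddSubgroup.closure
      {y : R | (∃ a ∈ I, y = e * a) ∨ (∃ b ∈ I, y = b * e) ∨ (∃ a ∈ I, ∃ b ∈ I, y = a * e * b)}
        : Set R) = (I : Set R) :=
  stmt7_general e hfull I u humem huabs
end

section
/- Let R be a ring that is the union of an increasing chain of unital subrings e₁Re₁ ⊆ e₂Re₂ ⊆ ⋯ determined by a countable approximate unit of idempotents {eₙ}, and let e be an idempotent of R with eRe ⊆ e₁Re₁ (i.e., eₙe = eeₙ = e for all n). If ReR = R, then for each n, eRe is a full corner of eₙReₙ, meaning (eₙReₙ)e(eₙReₙ) = eₙReₙ. -/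
/-!
The compression `x ↦ eₙ x eₙ` is additive and fixes `eₙReₙ` pointwise. Since `f = eₙ f eₙ`, it
sends `a f b` to `(eₙ a eₙ) f (eₙ b eₙ)`, and since `f` is idempotent, every generator `fa`, `af`,
`afb` of `RfR` has the form `a f b`. Compressing `RfR = R` therefore gives
`(eₙReₙ)f(eₙReₙ) = eₙReₙ`.
-/

namespace CornerRing

variable {R : Type*} [NonUnitalRing R]

def corner (p : R) : AddSubgroup R where
  carrier := {x | p * x * p = x}
  add_mem' {x y} hx hy := by simp_all [mul_add, add_mul]
  zero_mem' := by simp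
  neg_mem' {x} hx := by simp_all [mul_neg, neg_mul]

theorem mem_corner {p x : R} : x ∈ corner p ↔ p * x * p = x := Iff.rfl

def compress (p : R) : R →+ R := (AddMonoidHom.mulRight p).comp (AddMonoidHom.mulLeft p)

theorem compress_apply (p x : R) : compress p x = p * x * p := rfl

theorem compress_of_mem_corner {p x : R} (hx : x ∈ corner p) : compress p x = x := hx

theorem compress_mem_corner {p : R} (hp : IsIdempotentElem p) (x : R) :
    compress p x ∈ corner p := by
  rw [mem_corner, compress_apply, mul_assoc, mul_assoc, hp.eq, ← mul_assoc, ← mul_assoc, hp.eq,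
    mul_assoc]

theorem idem_mul_of_mem_corner {p x : R} (hp : IsIdempotentElem p) (hx : x ∈ corner p) :
    p * x = x := by
  rw [mem_corner] at hx
  rw [← hx, ← mul_assoc, ← mul_assoc, hp.eq]

theorem mul_idem_of_mem_corner {p x : R} (hp : IsIdempotentElem p) (hx : x ∈ corner p) :
    x * p = x := by
  rw [mem_corner] at hx
  rw [← hx, mul_assoc, hp.eq]

theorem mul_mul_mem_corner {p a b : R} (hp : IsIdempotentElem p) (ha : a ∈ corner p)
    (hb : b ∈ corner p) (f : R) : a * f * b ∈ corner p := by
  rw [mem_corner, mul_assoc, mul_assoc, mul_idem_of_mem_corner hp hb, ← mul_assoc, ← mul_assoc,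
    idem_mul_of_mem_corner hp ha]

theorem compress_mul_mul {p f : R} (hf : f ∈ corner p) (a b : R) :
    compress p (a * f * b) = compress p a * f * compress p b := by
  rw [mem_corner] at hf
  simp only [compress_apply]
  conv_lhs => rw [← hf]
  simp only [mul_assoc]

theorem exists_eq_mul_mul_of_mem_generators {f y : R} (hf : IsIdempotentElem f)
    (hy : (∃ a, y = f * a) ∨ (∃ a, y = a * f) ∨ (∃ a b, y = a * f * b)) :
    ∃ a b, y = a * f * b := by
  obtain ⟨a, rfl⟩ | ⟨a, rfl⟩ | hy := hy
  · exact ⟨f, a, by rw [hf.eq]⟩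
  · exact ⟨a, f, by rw [mul_assoc, hf.eq]⟩
  · exact hy

theorem closure_mul_mul_eq_corner {p f : R} (hp : IsIdempotentElem p) (hf : IsIdempotentElem f)
    (hfp : f ∈ corner p) (hfull : ∀ x : R, x ∈ AddSubgroup.closure
      {y : R | (∃ a, y = f * a) ∨ (∃ a, y = a * f) ∨ (∃ a b, y = a * f * b)}) :
    AddSubgroup.closure {y : R | ∃ a ∈ corner p, ∃ b ∈ corner p, y = a * f * b} = corner p := by
  refine le_antisymm ?_ fun x hx => ?_
  · rw [AddSubgroup.closure_le]
    rintro _ ⟨a, ha, b, hb, rfl⟩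
    exact mul_mul_mem_corner hp ha hb f
  · have hx' : compress p x ∈ (AddSubgroup.closure _).map (compress p) :=
      AddSubgroup.mem_map_of_mem _ (hfull x)
    rw [compress_of_mem_corner hx, AddMonoidHom.map_closure] at hx'
    refine AddSubgroup.closure_mono ?_ hx'
    rintro _ ⟨y, hy, rfl⟩
    obtain ⟨a, b, rfl⟩ := exists_eq_mul_mul_of_mem_generators hf hy
    exact ⟨compress p a, compress_mem_corner hp a, compress p b, compress_mem_corner hp b,
      compress_mul_mul hfp a b⟩

end CornerRing

theorem stmt15_general {R : Type*} [NonUnitalRing R] (e : ℕ → R) (f : R)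
    (hidem : ∀ n, e n * e n = e n)
    (hf : f * f = f)
    (hfe : ∀ n, e n * f = f ∧ f * e n = f)
    (hfull : ∀ x : R, x ∈ AddSubgroup.closure
      {y : R | (∃ a, y = f * a) ∨ (∃ a, y = a * f) ∨ (∃ a b, y = a * f * b)}) :
    ∀ n, (AddSubgroup.closure
      {y : R | ∃ a ∈ {x : R | e n * x * e n = x}, ∃ b ∈ {x : R | e n * x * e n = x},
        y = a * f * b} : Set R) = {x : R | e n * x * e n = x} := by
  intro n
  have hfe_n : f ∈ CornerRing.corner (e n) := by rw [CornerRing.mem_corner, (hfe n).1, (hfe n).2]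
  exact congrArg SetLike.coe (CornerRing.closure_mul_mul_eq_corner (hidem n) hf hfe_n hfull)

/-- Let `R` be the union of the increasing chain of unital corners `eₙReₙ` determined by a
countable approximate unit of idempotents, and let `f` be an idempotent with `fRf ⊆ e₁Re₁`
(i.e. `eₙf = feₙ = f` for all `n`). If `RfR = R`, then `fRf` is a full corner of each
`eₙReₙ`: `(eₙReₙ)f(eₙReₙ) = eₙReₙ`. -/
theorem stmt15 {R : Type*} [NonUnitalRing R] (e : ℕ → R) (f : R)
    (hidem : ∀ n, e n * e n = e n)
    (hchain : ∀ n, e (n + 1) * e n = e n ∧ e n * e (n + 1) = e n)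
    (habs : ∀ x : R, ∃ n, e n * x = x ∧ x * e n = x)
    (hf : f * f = f)
    (hfe : ∀ n, e n * f = f ∧ f * e n = f)
    (hfull : ∀ x : R, x ∈ AddSubgroup.closure
      {y : R | (∃ a, y = f * a) ∨ (∃ a, y = a * f) ∨ (∃ a b, y = a * f * b)}) :
    ∀ n, (AddSubgroup.closure
      {y : R | ∃ a ∈ {x : R | e n * x * e n = x}, ∃ b ∈ {x : R | e n * x * e n = x},
        y = a * f * b} : Set R) = {x : R | e n * x * e n = x} :=
  stmt15_general e f hidem hf hfe hfull
end

section
/- Let R be a ring with a countable approximate unit of idempotents {eₙ}, let I₂ ⊆ R be an ideal containing an ideal I₁, and suppose ē := e + I₁ satisfies (R/I₁)ē(R/I₁) = R/I₁ for an idempotent e ∈ R with ReR = R. Then for every idempotent p in the n×n matrix ring Mₙ(I₂/I₁), there exist k ∈ ℕ and an idempotent q ∈ M_k(ē(I₂/I₁)ē) such that p and q define the same class in K₀, witnessed by elements z, w with zw = diag(p,0,…,0) and (wz)² = q. -/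
/-!
Since `ē` is full, every entry of `p` is a finite sum `∑ aₜ ē bₜ`, so `p = X D Y` for rectangular
matrices `X`, `Y` and the scalar idempotent `D = diag(ē, …, ē)`. Then `z = p X D` and `w = D Y p`
satisfy `z w = p³ = p`, while `w z = D (Y p X) D` is an idempotent with entries in `ē(I₂/I₁)ē`.
Padding `z` and `w` with zero blocks makes them square.
-/

/-- The standard embedding of an `n × n` matrix as the upper-left corner of a `k × k` matrix
(`diag(p, 0, …, 0)`). -/
def cornerEmbed {Q : Type*} [Zero Q] {n k : ℕ} (p : Matrix (Fin n) (Fin n) Q) :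
    Matrix (Fin k) (Fin k) Q :=
  fun i j => if h : (i : ℕ) < n ∧ (j : ℕ) < n then p ⟨i, h.1⟩ ⟨j, h.2⟩ else 0

lemma TwoSidedIdeal.exists_coe_eq_image_of_surjective {R S : Type*} [NonUnitalRing R]
    [NonUnitalRing S] (f : R →ₙ+* S) (hf : Function.Surjective f) (I : TwoSidedIdeal R) :
    ∃ J : TwoSidedIdeal S, (J : Set S) = f '' I := by
  refine ⟨.mk' (f '' I) ⟨0, I.zero_mem, map_zero f⟩ ?_ ?_ ?_ ?_, TwoSidedIdeal.coe_mk' ..⟩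
  · rintro _ _ ⟨x, hx, rfl⟩ ⟨y, hy, rfl⟩
    exact ⟨x + y, I.add_mem hx hy, map_add f x y⟩
  · rintro _ ⟨x, hx, rfl⟩
    exact ⟨-x, I.neg_mem hx, map_neg f x⟩
  · rintro a _ ⟨y, hy, rfl⟩
    obtain ⟨x, rfl⟩ := hf a
    exact ⟨x * y, I.mul_mem_left x y hy, map_mul f x y⟩
  · rintro _ b ⟨x, hx, rfl⟩
    obtain ⟨y, rfl⟩ := hf b
    exact ⟨x * y, I.mul_mem_right x y hx, map_mul f x y⟩

lemma exists_sum_eq_of_mem_closure {Q : Type*} [NonUnitalRing Q] {c v : Q}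
    (hv : v ∈ AddSubgroup.closure {y : Q | ∃ a b : Q, y = a * c * b}) :
    ∃ (k : ℕ) (A B : Fin k → Q), v = ∑ t, A t * c * B t := by
  induction hv using AddSubgroup.closure_induction with
  | mem x hx =>
    obtain ⟨a, b, rfl⟩ := hx
    exact ⟨1, fun _ => a, fun _ => b, by simp⟩
  | zero => exact ⟨0, ![], ![], by simp⟩
  | add x y _ _ hx hy =>
    obtain ⟨k₁, A₁, B₁, rfl⟩ := hx
    obtain ⟨k₂, A₂, B₂, rfl⟩ := hy
    exact ⟨k₁ + k₂, Fin.append A₁ A₂, Fin.append B₁ B₂, by simp [Fin.sum_univ_add]⟩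
  | neg x _ hx =>
    obtain ⟨k, A, B, rfl⟩ := hx
    exact ⟨k, fun t => -A t, B, by simp⟩

namespace Matrix

variable {m n κ Q : Type*}

lemma fromBlocks_apply_mem {l o : Type*} {s : Set Q} {A : Matrix n l Q} {B : Matrix n m Q}
    {C : Matrix o l Q} {D : Matrix o m Q} (hA : ∀ i j, A i j ∈ s) (hB : ∀ i j, B i j ∈ s)
    (hC : ∀ i j, C i j ∈ s) (hD : ∀ i j, D i j ∈ s) : ∀ i j, fromBlocks A B C D i j ∈ s := by
  rintro (i | i) (j | j) <;> simp [*]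

variable [NonUnitalRing Q]

lemma mul_apply_mem_of_left [Fintype κ] {I : TwoSidedIdeal Q} {A : Matrix m κ Q}
    (hA : ∀ i j, A i j ∈ I) (B : Matrix κ n Q) (i : m) (j : n) : (A * B) i j ∈ I :=
  sum_mem fun t _ => I.mul_mem_right _ _ (hA i t)

lemma mul_apply_mem_of_right [Fintype κ] {I : TwoSidedIdeal Q} (A : Matrix m κ Q)
    {B : Matrix κ n Q} (hB : ∀ i j, B i j ∈ I) (i : m) (j : n) : (A * B) i j ∈ I :=
  sum_mem fun t _ => I.mul_mem_left _ _ (hB t j)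

lemma mul_diagonal_mul_apply [Fintype κ] [DecidableEq κ] (X : Matrix m κ Q) (d : κ → Q)
    (Y : Matrix κ n Q) (i : m) (j : n) :
    (X * diagonal d * Y) i j = ∑ a, X i a * d a * Y a j := by
  rw [mul_apply]
  simp only [mul_diagonal]

lemma exists_eq_mul_diagonal_mul_of_mem_closure [Fintype m] [Fintype n] [DecidableEq m]
    [DecidableEq n] {c : Q} {p : Matrix m n Q}
    (hp : ∀ i j, p i j ∈ AddSubgroup.closure {y : Q | ∃ a b : Q, y = a * c * b}) :
    ∃ (k : ℕ) (X : Matrix m (Fin k) Q) (Y : Matrix (Fin k) n Q),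
      p = X * diagonal (fun _ : Fin k => c) * Y := by
  choose k A B hAB using fun i j => exists_sum_eq_of_mem_closure (hp i j)
  -- one column of `X` and one row of `Y` for every summand of every entry of `p`
  let σ := Σ ij : m × n, Fin (k ij.1 ij.2)
  let ε := Fintype.equivFin σ
  refine ⟨Fintype.card σ,
    of fun i t => if i = (ε.symm t).1.1 then A _ _ (ε.symm t).2 else 0,
    of fun t j => if (ε.symm t).1.2 = j then B _ _ (ε.symm t).2 else 0, ?_⟩
  ext i j
  rw [mul_diagonal_mul_apply]
  simp only [of_apply]
  rw [ε.symm.sum_comp (fun a => (if i = a.1.1 then A _ _ a.2 else 0) * c *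
    (if a.1.2 = j then B _ _ a.2 else 0))]
  simp [σ, Fintype.sum_sigma, Fintype.sum_prod_type, hAB, ite_mul, mul_ite]

end Matrix

open Matrix

lemma cornerEmbed_eq_reindex_fromBlocks {Q : Type*} [Zero Q] {n k : ℕ}
    (p : Matrix (Fin n) (Fin n) Q) :
    (cornerEmbed p : Matrix (Fin (n + k)) (Fin (n + k)) Q) =
      reindex finSumFinEquiv finSumFinEquiv (fromBlocks p 0 0 (0 : Matrix (Fin k) (Fin k) Q)) := by
  ext i j
  induction i using Fin.addCases <;> induction j using Fin.addCases <;> simp [cornerEmbed]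

lemma exists_mul_eq_cornerEmbed_mul {Q : Type*} [NonUnitalRing Q] {n k : ℕ} {s t : Set Q}
    (hs : 0 ∈ s) (ht : 0 ∈ t) {z : Matrix (Fin n) (Fin k) Q} {w : Matrix (Fin k) (Fin n) Q}
    (hz : ∀ i j, z i j ∈ s) (hw : ∀ i j, w i j ∈ s) (hwz_mem : ∀ i j, (w * z) i j ∈ t)
    (hwz : IsIdempotentElem (w * z)) :
    ∃ Z W : Matrix (Fin (n + k)) (Fin (n + k)) Q, (∀ i j, Z i j ∈ s) ∧ (∀ i j, W i j ∈ s) ∧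
      (∀ i j, (W * Z) i j ∈ t) ∧ IsIdempotentElem (W * Z) ∧ Z * W = cornerEmbed (z * w) := by
  set Z := reindex finSumFinEquiv finSumFinEquiv (fromBlocks 0 z 0 0)
  set W := reindex finSumFinEquiv finSumFinEquiv (fromBlocks 0 0 w 0)
  have hWZ : W * Z = reindex finSumFinEquiv finSumFinEquiv (fromBlocks 0 0 0 (w * z)) := by
    simp [Z, W, fromBlocks_multiply]
  refine ⟨Z, W, ?_, ?_, ?_, ?_, ?_⟩
  · exact fun i j => fromBlocks_apply_mem (fun _ _ => hs) hz (fun _ _ => hs) (fun _ _ => hs) _ _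
  · exact fun i j => fromBlocks_apply_mem (fun _ _ => hs) (fun _ _ => hs) hw (fun _ _ => hs) _ _
  · rw [hWZ]
    exact fun i j =>
      fromBlocks_apply_mem (fun _ _ => ht) (fun _ _ => ht) (fun _ _ => ht) hwz_mem _ _
  · rw [IsIdempotentElem, hWZ]
    simp [fromBlocks_multiply, hwz.eq]
  · simp [Z, W, cornerEmbed_eq_reindex_fromBlocks, fromBlocks_multiply]

theorem stmt16_general {R Q : Type*} [NonUnitalRing R] [NonUnitalRing Q]
    (I₂ : TwoSidedIdeal R)
    (e : R) (he : e * e = e)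
    (π : R →ₙ+* Q) (hπ : Function.Surjective π)
    (hebar : ∀ q : Q, q ∈ AddSubgroup.closure {y : Q | ∃ a b : Q, y = a * π e * b})
    (n : ℕ) (p : Matrix (Fin n) (Fin n) Q)
    (hpmem : ∀ i j, p i j ∈ π '' (I₂ : Set R)) (hp : p * p = p) :
    ∃ (k : ℕ), n ≤ k ∧ ∃ q z w : Matrix (Fin k) (Fin k) Q,
      (∀ i j, q i j ∈ {y : Q | ∃ x ∈ π '' (I₂ : Set R), y = π e * x * π e}) ∧
      q * q = q ∧
      (∀ i j, z i j ∈ π '' (I₂ : Set R)) ∧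
      (∀ i j, w i j ∈ π '' (I₂ : Set R)) ∧
      z * w = cornerEmbed p ∧
      (w * z) * (w * z) = q := by
  obtain ⟨J, hJ⟩ := TwoSidedIdeal.exists_coe_eq_image_of_surjective π hπ I₂
  simp only [← hJ, SetLike.mem_coe] at hpmem ⊢
  obtain ⟨k, X, Y, hXY⟩ := exists_eq_mul_diagonal_mul_of_mem_closure fun i j => hebar (p i j)
  set D := diagonal fun _ : Fin k => π e
  have hD : D * D = D := by rw [diagonal_mul_diagonal, ← map_mul, he]
  set z := p * X * D
  set w := D * Y * p
  have hzw : z * w = p :=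
    calc z * w = p * (X * (D * D) * Y) * p := by simp only [z, w, Matrix.mul_assoc]
      _ = p := by rw [hD, ← hXY, hp, hp]
  have hwz : w * z = D * (Y * p * X) * D := by
    simp only [w, z, Matrix.mul_assoc, ← Matrix.mul_assoc p p, hp]
  have hwz_idem : IsIdempotentElem (w * z) :=
    calc w * z * (w * z) = w * (z * w) * z := by simp only [Matrix.mul_assoc]
      _ = w * z := by rw [hzw, show w * p = w by simp only [w, Matrix.mul_assoc, hp]]
  obtain ⟨Z, W, hZ, hW, hWZ, hWZ_idem, hZW⟩ :=
    exists_mul_eq_cornerEmbed_mul (s := J) (t := {y : Q | ∃ x ∈ J, y = π e * x * π e})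
      J.zero_mem ⟨0, J.zero_mem, by simp⟩ (mul_apply_mem_of_left (mul_apply_mem_of_left hpmem X) D)
      (mul_apply_mem_of_right (D * Y) hpmem)
      (fun a b => ⟨(Y * p * X) a b, mul_apply_mem_of_left (mul_apply_mem_of_right Y hpmem) X a b,
        by rw [hwz, mul_diagonal, diagonal_mul]⟩) hwz_idem
  exact ⟨n + k, n.le_add_right k, W * Z, Z, W, hWZ, hWZ_idem, hZ, hW, hzw ▸ hZW, hWZ_idem⟩

/-- Let `R` be a ring with a countable approximate unit of idempotents, `I₁ ⊆ I₂` two-sided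
ideals and `e` an idempotent with `ReR = R`. Let `π : R → Q` realize the quotient `R/I₁` and
suppose `ē := π e` satisfies `(R/I₁)ē(R/I₁) = R/I₁`. Then every idempotent matrix `p` over
`I₂/I₁` is Murray–von Neumann equivalent to an idempotent matrix `q` over `ē(I₂/I₁)ē`,
witnessed by matrices `z, w` over `I₂/I₁` with `z*w = diag(p,0,…,0)` and `(w*z)² = q`. -/
theorem stmt16 {R Q : Type*} [NonUnitalRing R] [NonUnitalRing Q]
    (u : ℕ → R) (huid : ∀ n, u n * u n = u n)
    (huchain : ∀ n, u (n + 1) * u n = u n ∧ u n * u (n + 1) = u n)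
    (huabs : ∀ x : R, ∃ n, u n * x = x ∧ x * u n = x)
    (I₁ I₂ : TwoSidedIdeal R) (hle : I₁ ≤ I₂)
    (e : R) (he : e * e = e)
    (hfull : ∀ x : R, x ∈ AddSubgroup.closure
      {y : R | (∃ a, y = e * a) ∨ (∃ a, y = a * e) ∨ (∃ a b, y = a * e * b)})
    (π : R →ₙ+* Q) (hπ : Function.Surjective π) (hker : ∀ x : R, π x = 0 ↔ x ∈ I₁)
    (hebar : ∀ q : Q, q ∈ AddSubgroup.closure {y : Q | ∃ a b : Q, y = a * π e * b})
    (n : ℕ) (p : Matrix (Fin n) (Fin n) Q)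
    (hpmem : ∀ i j, p i j ∈ π '' (I₂ : Set R)) (hp : p * p = p) :
    ∃ (k : ℕ), n ≤ k ∧ ∃ q z w : Matrix (Fin k) (Fin k) Q,
      (∀ i j, q i j ∈ {y : Q | ∃ x ∈ π '' (I₂ : Set R), y = π e * x * π e}) ∧
      q * q = q ∧
      (∀ i j, z i j ∈ π '' (I₂ : Set R)) ∧
      (∀ i j, w i j ∈ π '' (I₂ : Set R)) ∧
      z * w = cornerEmbed p ∧
      (w * z) * (w * z) = q :=
  stmt16_general I₂ e he π hπ hebar n p hpmem hp
end
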